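/- Let σ > 0, μ ∈ ℝ, and α ∈ ℝ. Then ∫_ℝ p_{μ,σ}(x)^α · p_{0,σ}(x)^{1−α} dx = exp(α(α−1)μ²/(2σ²)). -/
import Mathlib

open Real ProbabilityTheory

/-- The Gaussian density with mean `m` and variance `σ²` on `ℝ`. -/
noncomputable def gaussianDensity (m σ x : ℝ) : ℝ :=
  (Real.sqrt (2 * Real.pi * σ ^ 2))⁻¹ * Real.exp (-(x - m) ^ 2 / (2 * σ ^ 2))

theorem renyi_integral_gaussian (σ μ α : ℝ) (hσ : 0 < σ) :
    ∫ x : ℝ, gaussianDensity μ σ x ^ α * gaussianDensity 0 σ x ^ (1 - α) =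
      Real.exp (α * (α - 1) * μ ^ 2 / (2 * σ ^ 2)) := by
  have hσ2 : (0:ℝ) < σ ^ 2 := by positivity
  have hC : (0:ℝ) < (Real.sqrt (2 * Real.pi * σ ^ 2))⁻¹ := by
    have : (0:ℝ) < 2 * Real.pi * σ ^ 2 := by positivity
    positivity
  set v : NNReal := ⟨σ ^ 2, hσ2.le⟩ with hv
  have hveq : ((v : ℝ)) = σ ^ 2 := rfl
  have key : ∀ x : ℝ,
      gaussianDensity μ σ x ^ α * gaussianDensity 0 σ x ^ (1 - α) =
        Real.exp (α * (α - 1) * μ ^ 2 / (2 * σ ^ 2)) * gaussianPDFReal (α * μ) v x := by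
    intro x
    unfold gaussianDensity gaussianPDFReal
    rw [Real.mul_rpow hC.le (Real.exp_pos _).le, Real.mul_rpow hC.le (Real.exp_pos _).le,
      ← Real.exp_mul, ← Real.exp_mul]
    have hCcomb : (Real.sqrt (2 * Real.pi * σ ^ 2))⁻¹ ^ α *
        (Real.sqrt (2 * Real.pi * σ ^ 2))⁻¹ ^ (1 - α) =
        (Real.sqrt (2 * Real.pi * σ ^ 2))⁻¹ := by
      rw [← Real.rpow_add hC]
      simp
    have hexp : Real.exp (-(x - μ) ^ 2 / (2 * σ ^ 2) * α) *
        Real.exp (-(x - 0) ^ 2 / (2 * σ ^ 2) * (1 - α)) =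
        Real.exp (α * (α - 1) * μ ^ 2 / (2 * σ ^ 2)) *
          Real.exp (-(x - α * μ) ^ 2 / (2 * (v:ℝ))) := by
      rw [← Real.exp_add, ← Real.exp_add, hveq]
      congr 1
      field_simp
      ring
    calc (Real.sqrt (2 * Real.pi * σ ^ 2))⁻¹ ^ α *
          Real.exp (-(x - μ) ^ 2 / (2 * σ ^ 2) * α) *
          ((Real.sqrt (2 * Real.pi * σ ^ 2))⁻¹ ^ (1 - α) *
          Real.exp (-(x - 0) ^ 2 / (2 * σ ^ 2) * (1 - α)))
        = ((Real.sqrt (2 * Real.pi * σ ^ 2))⁻¹ ^ α *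
            (Real.sqrt (2 * Real.pi * σ ^ 2))⁻¹ ^ (1 - α)) *
          (Real.exp (-(x - μ) ^ 2 / (2 * σ ^ 2) * α) *
            Real.exp (-(x - 0) ^ 2 / (2 * σ ^ 2) * (1 - α))) := by ring
      _ = _ := by rw [hCcomb, hexp, hveq]; ring
  simp_rw [key]
  rw [MeasureTheory.integral_const_mul, integral_gaussianPDFReal_eq_one (α * μ)
    (fun h => hσ2.ne' (by rw [← hveq, h]; simp)), mul_one]
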